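/- arXiv:math/0303301 — 4 statements merged into one kernel-verified Lean document; each statement's English description precedes it below -/
import Mathlib

section
/- Let α, β be nonzero real numbers with α ≠ β, let λ ≥ 1 and set t = (λ + 1/λ)/2. Then det(X_α(v), X_β^λ(v)) ≠ 0 for every v ∈ ℝ² with v ≠ (0,0) if and only if t < ψ(α,β). -/
noncomputable def psi (α β : ℝ) : ℝ :=
  (-(α * β) + |α * β| * Real.sqrt ((α ^ 2 + 1) * (β ^ 2 + 1))) / (α ^ 2 * β ^ 2)

/-- `det2 v w = v₁w₂ − v₂w₁`. -/
def det2 (v w : ℝ × ℝ) : ℝ := v.1 * w.2 - v.2 * w.1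

/-- The logarithmic vector field `X_α(x,y) = (x − αy, αx + y)`. -/
def Xlog (α : ℝ) (v : ℝ × ℝ) : ℝ × ℝ := (v.1 - α * v.2, α * v.1 + v.2)

/-- The pushforward of `X_β` by `B_λ = diag(1,λ)`. -/
noncomputable def XlogLam (β l : ℝ) (v : ℝ × ℝ) : ℝ × ℝ :=
  (v.1 - (β / l) * v.2, l * β * v.1 + v.2)

/-!
The determinant `det(X_α(v), X_β^λ(v))` is a binary quadratic form in `v`, so the two fields are
independent off the origin exactly when its discriminant is negative. With `p = αβ` and
`t = (λ + 1/λ)/2` this discriminant is `4((pt + 1)² − (α² + 1)(β² + 1))`, and `ψ(α,β)` is the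
nonnegative root in `t` of `(pt + 1)² = (α² + 1)(β² + 1)`; the other root is `≤ 0 < t`.
-/

theorem binaryQuadratic_ne_zero_iff_discrim_neg (a b c : ℝ) :
    (∀ v : ℝ × ℝ, v ≠ 0 → a * v.1 ^ 2 + b * v.1 * v.2 + c * v.2 ^ 2 ≠ 0) ↔
      discrim a b c < 0 := by
  constructor
  · intro h
    have ha : a ≠ 0 := by simpa using h (1, 0) (by simp)
    by_contra! hd
    obtain ⟨x, hx⟩ := exists_quadratic_eq_zero ha
      ⟨√(discrim a b c), (Real.mul_self_sqrt hd).symm⟩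
    exact h (x, 1) (by simp) (by linear_combination hx)
  · rintro hd ⟨x, y⟩ hv
    by_cases hy : y = 0
    · subst hy
      have hx : x ≠ 0 := by simpa using hv
      have ha : a ≠ 0 := by rintro rfl; nlinarith [discrim.eq_def 0 b c, sq_nonneg b]
      simpa using And.intro ha hx
    · have hroot := quadratic_ne_zero_of_discrim_ne_sq
        (fun s hs => (sq_nonneg s).not_gt (hs ▸ hd)) (x / y)
      intro hq
      apply hroot
      field_simp
      linear_combination hq

theorem det2_Xlog_XlogLam (α β : ℝ) {l : ℝ} (hl : l ≠ 0) (v : ℝ × ℝ) :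
    det2 (Xlog α v) (XlogLam β l v) =
      (l * β - α) * v.1 ^ 2 + α * β * (1 / l - l) * v.1 * v.2 + (β / l - α) * v.2 ^ 2 := by
  simp only [det2, Xlog, XlogLam]
  field_simp
  ring

theorem discrim_det2_Xlog_XlogLam (α β : ℝ) {l : ℝ} (hl : l ≠ 0) :
    discrim (l * β - α) (α * β * (1 / l - l)) (β / l - α) =
      4 * ((α * β * ((l + 1 / l) / 2) + 1) ^ 2 - (α ^ 2 + 1) * (β ^ 2 + 1)) := by
  rw [discrim]
  field_simp
  ring

theorem sq_mul_add_one_lt_sq_iff {p D t : ℝ} (hp : p ≠ 0) (hD : 1 ≤ D) (ht : 0 < t) :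
    (p * t + 1) ^ 2 < D ^ 2 ↔ t < (-p + |p| * D) / p ^ 2 := by
  have hp' : 0 < |p| := abs_pos.mpr hp
  have hlow : -(|p| * D) < p ^ 2 * t + p := by
    nlinarith [neg_abs_le p, mul_pos (pow_pos hp' 2) ht, sq_abs p]
  calc (p * t + 1) ^ 2 < D ^ 2
      ↔ |p| * |p * t + 1| < |p| * D := by
        rw [sq_lt_sq, abs_of_nonneg (zero_le_one.trans hD), mul_lt_mul_iff_right₀ hp']
    _ ↔ p ^ 2 * t + p < |p| * D := by
        rw [← abs_mul, abs_lt, mul_add, mul_one, ← mul_assoc, ← sq, and_iff_right hlow]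
    _ ↔ t < (-p + |p| * D) / p ^ 2 := by
        rw [lt_div_iff₀ (by positivity)]
        constructor <;> intro h <;> linarith

theorem transverse_iff_t_lt_psi_general (α β l : ℝ) (hα : α ≠ 0) (hβ : β ≠ 0)
    (hl : 1 ≤ l) :
    (∀ v : ℝ × ℝ, v ≠ 0 → det2 (Xlog α v) (XlogLam β l v) ≠ 0) ↔
      (l + 1 / l) / 2 < psi α β := by
  have hl0 : 0 < l := by linarith
  have ht : 0 < (l + 1 / l) / 2 := by positivity
  have hD : 1 ≤ √((α ^ 2 + 1) * (β ^ 2 + 1)) :=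
    Real.one_le_sqrt.mpr (by nlinarith [sq_nonneg α, sq_nonneg β, sq_nonneg (α * β)])
  simp_rw [det2_Xlog_XlogLam α β hl0.ne']
  rw [binaryQuadratic_ne_zero_iff_discrim_neg, discrim_det2_Xlog_XlogLam α β hl0.ne',
    psi, ← mul_pow, ← sq_mul_add_one_lt_sq_iff (mul_ne_zero hα hβ) hD ht,
    Real.sq_sqrt (by positivity)]
  constructor <;> intro h <;> linarith

theorem transverse_iff_t_lt_psi (α β l : ℝ) (hα : α ≠ 0) (hβ : β ≠ 0)
    (hαβ : α ≠ β) (hl : 1 ≤ l) :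
    (∀ v : ℝ × ℝ, v ≠ 0 → det2 (Xlog α v) (XlogLam β l v) ≠ 0) ↔
      (l + 1 / l) / 2 < psi α β :=
  transverse_iff_t_lt_psi_general α β l hα hβ hl
end

section
/- Let α ≠ 0 and γ > 0 be real numbers, λ > 0, and let θ be a real number with cosθ·sinθ = 0 (i.e. θ is an integer multiple of π/2). Then det(Y_γ(v), Z_{α,λ,θ}(v)) ≠ 0 for every v ≠ (0,0) if and only if μ₋ < γ < μ₊, where μ₊ = 1 + 2α² + 2|α|√(1+α²) and μ₋ = 1 + 2α² − 2|α|√(1+α²). -/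
/-- The real (node) vector field `Y_γ(x,y) = (x, γy)`. -/
def Ynode (γ : ℝ) (v : ℝ × ℝ) : ℝ × ℝ := (v.1, γ * v.2)

/-- The rotation matrix by angle `θ`. -/
noncomputable def rotM (θ : ℝ) : Matrix (Fin 2) (Fin 2) ℝ :=
  !![Real.cos θ, -Real.sin θ; Real.sin θ, Real.cos θ]

/-- The matrix `M_α = [[1, −α],[α, 1]]` of the logarithmic vector field. -/
def Mlog (α : ℝ) : Matrix (Fin 2) (Fin 2) ℝ := !![1, -α; α, 1]

/-- `B_λ = diag(1,λ)`. -/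
def BM (l : ℝ) : Matrix (Fin 2) (Fin 2) ℝ := !![1, 0; 0, l]

/-- `B_λ⁻¹ = diag(1,1/λ)`. -/
noncomputable def BMinv (l : ℝ) : Matrix (Fin 2) (Fin 2) ℝ := !![1, 0; 0, 1 / l]

/-- The matrix `R_θ B_λ M_α B_λ⁻¹ R_{−θ}` of the pushforward of the
logarithmic vector field `X_α` by `R_θ ∘ B_λ`. -/
noncomputable def Zmat (α l θ : ℝ) : Matrix (Fin 2) (Fin 2) ℝ :=
  rotM θ * BM l * Mlog α * BMinv l * rotM (-θ)

/-- The pushforward of the logarithmic vector field `X_α` by `R_θ ∘ B_λ`,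
as a vector field on `ℝ × ℝ`. -/
noncomputable def Zfun (α l θ : ℝ) (v : ℝ × ℝ) : ℝ × ℝ :=
  ((Zmat α l θ).mulVec ![v.1, v.2] 0, (Zmat α l θ).mulVec ![v.1, v.2] 1)

def binQuad (a b c : ℝ) (v : ℝ × ℝ) : ℝ :=
  a * (v.1 * v.1) + b * (v.1 * v.2) + c * (v.2 * v.2)

lemma binQuad_ne_zero_iff_discrim_neg (a b c : ℝ) :
    (∀ v : ℝ × ℝ, v ≠ 0 → binQuad a b c v ≠ 0) ↔ discrim a b c < 0 := by
  constructor
  · intro hne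
    by_contra! hd
    rcases eq_or_ne a 0 with ha | ha
    · exact hne (1, 0) (by simp) (by simp [binQuad, ha])
    · obtain ⟨x, hx⟩ :=
        exists_quadratic_eq_zero ha ⟨√(discrim a b c), (Real.mul_self_sqrt hd).symm⟩
      exact hne (x, 1) (by simp) (by simpa [binQuad] using hx)
  · rintro hd ⟨x, y⟩ hv hq
    simp only [binQuad] at hq
    rcases eq_or_ne y 0 with rfl | hy
    · have hx : x ≠ 0 := by simpa using hv
      have ha : a = 0 := by simpa [hx] using hq
      rw [discrim, ha, mul_zero, zero_mul, sub_zero] at hd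
      exact (sq_nonneg b).not_gt hd
    · have hroot : a * (x / y * (x / y)) + b * (x / y) + c = 0 := by
        field_simp
        linear_combination hq
      rw [discrim_eq_sq_of_quadratic_eq_zero hroot] at hd
      linarith [sq_nonneg (2 * a * (x / y) + b)]

lemma one_sub_sq_sub_lt_zero_iff (α γ : ℝ) :
    (1 - γ) ^ 2 - 4 * γ * α ^ 2 < 0 ↔
      1 + 2 * α ^ 2 - 2 * |α| * Real.sqrt (1 + α ^ 2) < γ ∧
        γ < 1 + 2 * α ^ 2 + 2 * |α| * Real.sqrt (1 + α ^ 2) := by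
  have hr : (2 * |α| * √(1 + α ^ 2)) ^ 2 = 4 * α ^ 2 * (1 + α ^ 2) := by
    rw [mul_pow, mul_pow, sq_abs, Real.sq_sqrt (by positivity)]
    ring
  calc (1 - γ) ^ 2 - 4 * γ * α ^ 2 < 0
      ↔ (γ - (1 + 2 * α ^ 2)) ^ 2 < (2 * |α| * √(1 + α ^ 2)) ^ 2 := by
        rw [← sub_neg (b := (2 * |α| * √(1 + α ^ 2)) ^ 2), hr]; ring_nf
    _ ↔ |γ - (1 + 2 * α ^ 2)| < 2 * |α| * √(1 + α ^ 2) := by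
        rw [sq_lt_sq, abs_of_nonneg (by positivity : 0 ≤ 2 * |α| * √(1 + α ^ 2))]
    _ ↔ _ := by
        rw [abs_sub_lt_iff]
        constructor <;> rintro ⟨h₁, h₂⟩ <;> constructor <;> linarith

lemma exists_Zmat_eq_of_cos_mul_sin_eq_zero (α : ℝ) {l θ : ℝ} (hl : l ≠ 0)
    (hθ : Real.cos θ * Real.sin θ = 0) :
    ∃ a b, a * b = α ^ 2 ∧ Zmat α l θ = !![1, -a; b, 1] := by
  have hcs := Real.cos_sq_add_sin_sq θ
  rw [Zmat, rotM, rotM, BM, Mlog, BMinv, Real.cos_neg, Real.sin_neg]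
  simp only [Matrix.mul_fin_two]
  rcases mul_eq_zero.mp hθ with hc | hs
  · refine ⟨α * l, α / l, by field_simp, ?_⟩
    congrm !![?_, ?_; ?_, ?_] <;> grind
  · refine ⟨α / l, α * l, by field_simp, ?_⟩
    congrm !![?_, ?_; ?_, ?_] <;> grind

lemma det2_Ynode_Zfun {α l θ a b : ℝ} (γ : ℝ) (hZ : Zmat α l θ = !![1, -a; b, 1])
    (v : ℝ × ℝ) :
    det2 (Ynode γ v) (Zfun α l θ v) = binQuad b (1 - γ) (γ * a) v := by
  simp only [det2, Ynode, Zfun, hZ, binQuad, Matrix.mulVec, dotProduct, Fin.sum_univ_two,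
    Matrix.of_apply, Matrix.cons_val', Matrix.cons_val_fin_one, Matrix.cons_val_zero,
    Matrix.cons_val_one]
  ring

theorem transverse_iff_mu_interval_general (α γ θ l : ℝ)
    (hl : 0 < l) (hθ : Real.cos θ * Real.sin θ = 0) :
    (∀ v : ℝ × ℝ, v ≠ 0 → det2 (Ynode γ v) (Zfun α l θ v) ≠ 0) ↔
      (1 + 2 * α ^ 2 - 2 * |α| * Real.sqrt (1 + α ^ 2) < γ ∧
        γ < 1 + 2 * α ^ 2 + 2 * |α| * Real.sqrt (1 + α ^ 2)) := by
  obtain ⟨a, b, hab, hZ⟩ := exists_Zmat_eq_of_cos_mul_sin_eq_zero α hl.ne' hθ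
  have hdiscrim : discrim b (1 - γ) (γ * a) = (1 - γ) ^ 2 - 4 * γ * α ^ 2 := by
    rw [discrim, ← hab]; ring
  simp only [det2_Ynode_Zfun γ hZ]
  rw [binQuad_ne_zero_iff_discrim_neg, hdiscrim, one_sub_sq_sub_lt_zero_iff]

theorem transverse_iff_mu_interval (α γ θ l : ℝ) (hα : α ≠ 0) (hγ : 0 < γ)
    (hl : 0 < l) (hθ : Real.cos θ * Real.sin θ = 0) :
    (∀ v : ℝ × ℝ, v ≠ 0 → det2 (Ynode γ v) (Zfun α l θ v) ≠ 0) ↔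
      (1 + 2 * α ^ 2 - 2 * |α| * Real.sqrt (1 + α ^ 2) < γ ∧
        γ < 1 + 2 * α ^ 2 + 2 * |α| * Real.sqrt (1 + α ^ 2)) :=
  transverse_iff_mu_interval_general α γ θ l hl hθ
end

section
/- Let α ≠ 0, γ > 0, θ be real numbers with u := α cosθ sinθ ≠ 0 and γ ∉ [μ₋, μ₊], where μ₊ = 1 + 2α² + 2|α|√(1+α²) and μ₋ = 1 + 2α² − 2|α|√(1+α²). Then the set {s ∈ ℝ : s ≥ 0 and D(α,γ,θ,s) ≤ 0} is either empty or equal to a closed interval [s_m, s_M] with 0 < s_m < s_M, where D(α,γ,θ,s) = 4α²cos²θ sin²θ (γ−1)² s² + 4α cosθ sinθ (1−γ²) s + (γ² − 2γ(1+2α²) + 1). -/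
/-- The discriminant `D(α,γ,θ,s)` of the tangency form. -/
noncomputable def Ddisc (α γ θ s : ℝ) : ℝ :=
  4 * α ^ 2 * Real.cos θ ^ 2 * Real.sin θ ^ 2 * (γ - 1) ^ 2 * s ^ 2 +
  4 * α * Real.cos θ * Real.sin θ * (1 - γ ^ 2) * s +
  (γ ^ 2 - 2 * γ * (1 + 2 * α ^ 2) + 1)

theorem D_nonpos_set_outside_interval (α γ θ : ℝ) (hα : α ≠ 0) (hγ : 0 < γ)
    (hu : α * Real.cos θ * Real.sin θ ≠ 0)
    (hout : γ ∉ Set.Icc (1 + 2 * α ^ 2 - 2 * |α| * Real.sqrt (1 + α ^ 2))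
      (1 + 2 * α ^ 2 + 2 * |α| * Real.sqrt (1 + α ^ 2))) :
    {s : ℝ | 0 ≤ s ∧ Ddisc α γ θ s ≤ 0} = ∅ ∨
      ∃ sm sM : ℝ, 0 < sm ∧ sm < sM ∧
        {s : ℝ | 0 ≤ s ∧ Ddisc α γ θ s ≤ 0} = Set.Icc sm sM := by
  obtain ⟨u, hu_def⟩ : ∃ x : ℝ, x = α * Real.cos θ * Real.sin θ := ⟨_, rfl⟩
  have hune : u ≠ 0 := by rw [hu_def]; exact hu
  obtain ⟨A, hA_def⟩ : ∃ x : ℝ, x = 4 * u ^ 2 * (γ - 1) ^ 2 := ⟨_, rfl⟩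
  obtain ⟨B, hB_def⟩ : ∃ x : ℝ, x = 4 * u * (1 - γ ^ 2) := ⟨_, rfl⟩
  obtain ⟨C, hC_def⟩ : ∃ x : ℝ, x = γ ^ 2 - 2 * γ * (1 + 2 * α ^ 2) + 1 := ⟨_, rfl⟩
  have hDform : ∀ s : ℝ, Ddisc α γ θ s = A * s ^ 2 + B * s + C := by
    intro s; rw [Ddisc, hA_def, hB_def, hC_def, hu_def]; ring
  have ht : Real.sqrt (1 + α ^ 2) ^ 2 = 1 + α ^ 2 := Real.sq_sqrt (by positivity)
  have haa : |α| ^ 2 = α ^ 2 := sq_abs α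
  have habs : 0 ≤ 2 * |α| * Real.sqrt (1 + α ^ 2) := by positivity
  have hC : 0 < C := by
    rw [Set.mem_Icc, not_and_or, not_le, not_le] at hout
    rw [hC_def]
    rcases hout with h | h
    · have h2 : 0 < (1 + 2 * α ^ 2 + 2 * |α| * Real.sqrt (1 + α ^ 2)) - γ := by linarith
      nlinarith [mul_pos (sub_pos.2 h) h2]
    · have h2 : 0 < γ - (1 + 2 * α ^ 2 - 2 * |α| * Real.sqrt (1 + α ^ 2)) := by linarith
      nlinarith [mul_pos (sub_pos.2 h) h2]
  have hα2 : 0 < α ^ 2 := by positivity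
  have hγ1 : γ ≠ 1 := by
    intro h
    rw [hC_def, h] at hC
    nlinarith
  have hg1 : (γ - 1) ≠ 0 := sub_ne_zero.2 hγ1
  have hA : 0 < A := by rw [hA_def]; positivity
  obtain ⟨Δ, hΔ_def⟩ : ∃ x : ℝ, x = B ^ 2 - 4 * A * C := ⟨_, rfl⟩
  have hΔeq : Δ = 16 * u ^ 2 * (γ - 1) ^ 2 * (4 * γ + 4 * γ * α ^ 2) := by
    rw [hΔ_def, hA_def, hB_def, hC_def]; ring
  have hΔ : 0 < Δ := by
    rw [hΔeq]
    have h3 : 0 < 4 * γ + 4 * γ * α ^ 2 := by positivity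
    positivity
  obtain ⟨r, hr_def⟩ : ∃ x : ℝ, x = Real.sqrt Δ := ⟨_, rfl⟩
  have hr2 : r ^ 2 = Δ := by rw [hr_def]; exact Real.sq_sqrt hΔ.le
  have hrpos : 0 < r := by rw [hr_def]; exact Real.sqrt_pos.2 hΔ
  obtain ⟨sm, hsm_def⟩ : ∃ x : ℝ, x = (-B - r) / (2 * A) := ⟨_, rfl⟩
  obtain ⟨sM, hsM_def⟩ : ∃ x : ℝ, x = (-B + r) / (2 * A) := ⟨_, rfl⟩
  have hAne : A ≠ 0 := hA.ne'
  have hsum : sm + sM = -B / A := by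
    rw [hsm_def, hsM_def]; field_simp; ring
  have hprod : sm * sM = C / A := by
    have h1 : sm * sM = (B ^ 2 - r ^ 2) / (4 * A ^ 2) := by
      rw [hsm_def, hsM_def]; field_simp; ring
    rw [h1, hr2, hΔ_def]
    field_simp
    ring
  have hfact : ∀ s : ℝ, Ddisc α γ θ s = A * (s - sm) * (s - sM) := by
    intro s
    rw [hDform]
    have h1 : A * (s - sm) * (s - sM) = A * s ^ 2 - (A * (sm + sM)) * s + A * (sm * sM) := by
      ring
    rw [h1, hsum, hprod]
    field_simp
    ring
  have hsmlt : sm < sM := by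
    rw [hsm_def, hsM_def]
    have h2A : (0:ℝ) < 2 * A := by linarith
    rw [div_lt_div_iff₀ h2A h2A]
    nlinarith [mul_pos hrpos hA]
  have h4AC : 0 < 4 * A * C := by positivity
  by_cases hBs : 0 < -B
  · -- both roots positive
    have hsq : r ^ 2 < (-B) ^ 2 := by rw [hr2, hΔ_def]; nlinarith
    have hrB : r < -B := lt_of_pow_lt_pow_left₀ 2 (by linarith) hsq
    have hsmpos : 0 < sm := by
      rw [hsm_def]
      apply div_pos <;> linarith
    right
    refine ⟨sm, sM, hsmpos, hsmlt, ?_⟩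
    ext s
    simp only [Set.mem_setOf_eq, Set.mem_Icc]
    constructor
    · rintro ⟨hs0, hD⟩
      rw [hfact] at hD
      constructor
      · by_contra h
        push_neg at h
        have hp := mul_pos hA (mul_pos (sub_pos.2 h) (sub_pos.2 (lt_trans h hsmlt)))
        have he : A * ((sm - s) * (sM - s)) = A * (s - sm) * (s - sM) := by ring
        rw [he] at hp
        linarith
      · by_contra h
        push_neg at h
        have hp := mul_pos hA (mul_pos (sub_pos.2 (lt_trans hsmlt h)) (sub_pos.2 h))
        have he : A * ((s - sm) * (s - sM)) = A * (s - sm) * (s - sM) := by ring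
        rw [he] at hp
        linarith
    · rintro ⟨h1, h2⟩
      refine ⟨le_trans hsmpos.le h1, ?_⟩
      rw [hfact]
      have hp := mul_nonneg (mul_nonneg hA.le (sub_nonneg.2 h1)) (sub_nonneg.2 h2)
      have he : A * (s - sm) * (sM - s) = -(A * (s - sm) * (s - sM)) := by ring
      rw [he] at hp
      linarith
  · -- B > 0, both roots negative, set empty
    have hBne : B ≠ 0 := by
      rw [hB_def]
      have h5 : (1 : ℝ) - γ ^ 2 ≠ 0 := by
        intro h
        have h6 : (1 - γ) * (1 + γ) = 0 := by linear_combination h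
        rcases mul_eq_zero.1 h6 with h' | h'
        · exact hγ1 (by linarith)
        · linarith
      positivity
    have hBpos : 0 < B := lt_of_le_of_ne (by linarith [not_lt.1 hBs]) (Ne.symm hBne)
    have hsq : r ^ 2 < B ^ 2 := by rw [hr2, hΔ_def]; linarith
    have hrB : r < B := lt_of_pow_lt_pow_left₀ 2 (by linarith) hsq
    have hsMneg : sM < 0 := by
      rw [hsM_def]
      apply div_neg_of_neg_of_pos <;> linarith
    left
    rw [Set.eq_empty_iff_forall_notMem]
    rintro s ⟨hs0, hD⟩
    rw [hfact] at hD
    have h1 : 0 < s - sm := by linarith [hsmlt, hsMneg]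
    have h2 : 0 < s - sM := by linarith
    have hp := mul_pos (mul_pos hA h1) h2
    linarith
end

section
/- Let α ≠ 0, γ > 0, θ be real numbers with γ ≠ 1 and u := α cosθ sinθ ≠ 0. Then the discriminant of the quadratic polynomial s ↦ D(α,γ,θ,s) satisfies (4u(1−γ²))² − 4·(4u²(γ−1)²)·(γ² − 2γ(1+2α²) + 1) = 64 u² (γ−1)² γ (α²+1), and this quantity is strictly positive; consequently the equation D(α,γ,θ,s) = 0 has exactly two distinct real roots in s. -/
theorem D_second_discriminant (α γ θ : ℝ) (hα : α ≠ 0) (hγ : 0 < γ)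
    (hγ1 : γ ≠ 1) (hu : α * Real.cos θ * Real.sin θ ≠ 0) :
    (4 * (α * Real.cos θ * Real.sin θ) * (1 - γ ^ 2)) ^ 2 -
        4 * (4 * (α * Real.cos θ * Real.sin θ) ^ 2 * (γ - 1) ^ 2) *
          (γ ^ 2 - 2 * γ * (1 + 2 * α ^ 2) + 1) =
      64 * (α * Real.cos θ * Real.sin θ) ^ 2 * (γ - 1) ^ 2 * γ * (α ^ 2 + 1) ∧
    0 < 64 * (α * Real.cos θ * Real.sin θ) ^ 2 * (γ - 1) ^ 2 * γ * (α ^ 2 + 1) ∧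
    ∃ s₁ s₂ : ℝ, s₁ ≠ s₂ ∧ ∀ s : ℝ, Ddisc α γ θ s = 0 ↔ s = s₁ ∨ s = s₂ := by
  set u : ℝ := α * Real.cos θ * Real.sin θ with hudef
  have hu2 : 0 < u ^ 2 := by positivity
  have hγ1' : (γ - 1) ^ 2 > 0 := by
    have : γ - 1 ≠ 0 := sub_ne_zero.mpr hγ1
    positivity
  have hΔpos : 0 < 64 * u ^ 2 * (γ - 1) ^ 2 * γ * (α ^ 2 + 1) := by positivity
  refine ⟨by ring, hΔpos, ?_⟩
  set a : ℝ := 4 * u ^ 2 * (γ - 1) ^ 2 with hadef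
  set b : ℝ := 4 * u * (1 - γ ^ 2) with hbdef
  set c : ℝ := γ ^ 2 - 2 * γ * (1 + 2 * α ^ 2) + 1 with hcdef
  have ha : a ≠ 0 := by positivity
  have hΔ : discrim a b c = 64 * u ^ 2 * (γ - 1) ^ 2 * γ * (α ^ 2 + 1) := by
    simp only [discrim, hadef, hbdef, hcdef]; ring
  set r : ℝ := Real.sqrt (64 * u ^ 2 * (γ - 1) ^ 2 * γ * (α ^ 2 + 1)) with hrdef
  have hr : discrim a b c = r * r := by
    rw [hΔ, hrdef, Real.mul_self_sqrt hΔpos.le]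
  have hrpos : 0 < r := Real.sqrt_pos.mpr hΔpos
  refine ⟨(-b + r) / (2 * a), (-b - r) / (2 * a), ?_, fun s => ?_⟩
  · intro h
    have h2a : (0:ℝ) < 2 * a := by positivity
    have := (div_left_inj' (ne_of_gt h2a)).mp h
    linarith
  · have hform : Ddisc α γ θ s = a * s ^ 2 + b * s + c := by
      simp only [Ddisc, hadef, hbdef, hcdef, hudef]; ring
    rw [hform, sq]
    exact quadratic_eq_zero_iff ha hr s
end
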